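/- arXiv:2105.00717 — 5 statements merged into one kernel-verified Lean document; each statement's English description precedes it below -/
import Mathlib

section
/- Let μᵣ and μₛ be two probability measures on the same measurable space Ω, f a labeling function, and h₁, h₂ hypotheses. Define εᵣ(h) = μᵣ({x : h(x) ≠ f(x)}), εₛ(h) = μₛ({x : h(x) ≠ f(x)}), Δεᵣ = εᵣ(h₂) − εᵣ(h₁), Δεₛ = εₛ(h₂) − εₛ(h₁). Let A = {x : h₁(x) ≠ h₂(x) ∧ (h₁(x) ≠ f(x) ∨ h₂(x) ≠ f(x))}, and let δ_A = |μᵣ − μₛ|(A) be the total variation of the signed measure μᵣ − μₛ restricted to A. Then Δεᵣ ≥ Δεₛ − δ_A. -/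
/-! Writing `Eᵢ` for the error set of `hᵢ`, any finite measure `m` satisfies
`m E₂ - m E₁ = m (E₂ \ E₁) - m (E₁ \ E₂)`, so `Δεᵣ - Δεₛ = ν (E₂ \ E₁) - ν (E₁ \ E₂)` for
`ν = μᵣ - μₛ`. This is at least `-|ν| (E₁ ∆ E₂)`, and `E₁ ∆ E₂ ⊆ A`. -/

open MeasureTheory Set
open scoped symmDiff

namespace MeasureTheory

theorem VectorMeasure.of_sub_of_eq_of_sdiff_sub_of_sdiff {α M : Type*} [MeasurableSpace α]
    [AddCommGroup M] [TopologicalSpace M] [T2Space M] (v : VectorMeasure α M) {s t : Set α}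
    (hs : MeasurableSet s) (ht : MeasurableSet t) :
    v s - v t = v (s \ t) - v (t \ s) := by
  have hs' := v.of_sdiff (hs.inter ht) hs inter_subset_left
  have ht' := v.of_sdiff (ht.inter hs) ht inter_subset_left
  rw [sdiff_self_inter] at hs' ht'
  rw [hs', ht', inter_comm]
  abel

theorem SignedMeasure.abs_sub_le_totalVariation_symmDiff {α : Type*} [MeasurableSpace α]
    (ρ : SignedMeasure α) {s t : Set α} (hs : MeasurableSet s) (ht : MeasurableSet t) :
    |ρ s - ρ t| ≤ ρ.totalVariation.real (s ∆ t) := by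
  rw [ρ.of_sub_of_eq_of_sdiff_sub_of_sdiff hs ht, measureReal_symmDiff_eq hs ht]
  calc |ρ (s \ t) - ρ (t \ s)| ≤ ‖ρ (s \ t)‖ + ‖ρ (t \ s)‖ := abs_sub _ _
    _ ≤ _ := add_le_add (ρ.norm_le_totalVariation _) (ρ.norm_le_totalVariation _)

end MeasureTheory

theorem symmDiff_setOf_ne_subset {Ω Y : Type*} (f h₁ h₂ : Ω → Y) :
    {x | h₂ x ≠ f x} ∆ {x | h₁ x ≠ f x} ⊆
      {x | h₁ x ≠ h₂ x ∧ (h₁ x ≠ f x ∨ h₂ x ≠ f x)} := by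
  rintro x (⟨h₂x : h₂ x ≠ f x, h₁x : ¬h₁ x ≠ f x⟩ | ⟨h₁x : h₁ x ≠ f x, h₂x : ¬h₂ x ≠ f x⟩)
  · exact ⟨fun h => h₂x (h.symm.trans (not_not.mp h₁x)), Or.inr h₂x⟩
  · exact ⟨fun h => h₁x (h.trans (not_not.mp h₂x)), Or.inl h₁x⟩

theorem risk_diff_lower_bound_general {Ω Y : Type*} [MeasurableSpace Ω]
    (μr μs : Measure Ω) [IsProbabilityMeasure μr] [IsProbabilityMeasure μs]
    (f h₁ h₂ : Ω → Y)
    (hm1 : MeasurableSet {x | h₁ x ≠ f x})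
    (hm2 : MeasurableSet {x | h₂ x ≠ f x}) :
    (μr {x | h₂ x ≠ f x}).toReal - (μr {x | h₁ x ≠ f x}).toReal ≥
      ((μs {x | h₂ x ≠ f x}).toReal - (μs {x | h₁ x ≠ f x}).toReal) -
        ((μr.toSignedMeasure - μs.toSignedMeasure).totalVariation
          {x | h₁ x ≠ h₂ x ∧ (h₁ x ≠ f x ∨ h₂ x ≠ f x)}).toReal := by
  set ρ := μr.toSignedMeasure - μs.toSignedMeasure
  have hsub := ρ.abs_sub_le_totalVariation_symmDiff hm2 hm1
  have hmono : ρ.totalVariation.real _ ≤ ρ.totalVariation.real _ :=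
    measureReal_mono (symmDiff_setOf_ne_subset f h₁ h₂)
  rw [Measure.toSignedMeasure_sub_apply hm2, Measure.toSignedMeasure_sub_apply hm1] at hsub
  simp only [measureReal_def] at hsub hmono
  linarith [(abs_le.mp hsub).1]

theorem risk_diff_lower_bound {Ω Y : Type*} [MeasurableSpace Ω]
    (μr μs : Measure Ω) [IsProbabilityMeasure μr] [IsProbabilityMeasure μs]
    (f h₁ h₂ : Ω → Y)
    (hm1 : MeasurableSet {x | h₁ x ≠ f x})
    (hm2 : MeasurableSet {x | h₂ x ≠ f x})
    (hm12 : MeasurableSet {x | h₁ x ≠ h₂ x}) :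
    (μr {x | h₂ x ≠ f x}).toReal - (μr {x | h₁ x ≠ f x}).toReal ≥
      ((μs {x | h₂ x ≠ f x}).toReal - (μs {x | h₁ x ≠ f x}).toReal) -
        ((μr.toSignedMeasure - μs.toSignedMeasure).totalVariation
          {x | h₁ x ≠ h₂ x ∧ (h₁ x ≠ f x ∨ h₂ x ≠ f x)}).toReal :=
  risk_diff_lower_bound_general μr μs f h₁ h₂ hm1 hm2
end

section
/- Let μᵣ and μₛ be probability measures on Ω, f a labeling function, and h₁, h₂ any two hypotheses. Let δ(μᵣ, μₛ) denote the total variation distance between μᵣ and μₛ (i.e., the total variation norm of μᵣ − μₛ). Then the synthetic and real risk differences satisfy Δεₛ − Δεᵣ ≤ δ(μᵣ, μₛ). -/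
/-!
With `ξ = μr - μs`, the gap of the risk differences is `ξ D₁ - ξ D₂`, where `Dᵢ` is the
disagreement set of `hᵢ` with `f`. Writing `ξ = ξ⁺ - ξ⁻` (Jordan decomposition), this is at most
`ξ⁺ D₁ + ξ⁻ D₂ ≤ ξ⁺ Ω + ξ⁻ Ω = |ξ|(Ω)`.
-/

open MeasureTheory

namespace MeasureTheory.SignedMeasure

variable {α : Type*} [MeasurableSpace α]

theorem apply_le_posPart_real_univ (s : SignedMeasure α) {E : Set α} (hE : MeasurableSet E) :
    s E ≤ s.toJordanDecomposition.posPart.real Set.univ := by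
  rw [s.apply_eq_posPart_real_sub_negPart_real hE]
  have hmono := measureReal_mono (μ := s.toJordanDecomposition.posPart) (Set.subset_univ E)
  linarith [measureReal_nonneg (μ := s.toJordanDecomposition.negPart) (s := E)]

theorem neg_apply_le_negPart_real_univ (s : SignedMeasure α) {E : Set α} (hE : MeasurableSet E) :
    -s E ≤ s.toJordanDecomposition.negPart.real Set.univ := by
  rw [s.apply_eq_posPart_real_sub_negPart_real hE]
  have hmono := measureReal_mono (μ := s.toJordanDecomposition.negPart) (Set.subset_univ E)
  linarith [measureReal_nonneg (μ := s.toJordanDecomposition.posPart) (s := E)]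

theorem sub_apply_le_totalVariation_real_univ (s : SignedMeasure α) {E F : Set α}
    (hE : MeasurableSet E) (hF : MeasurableSet F) :
    s E - s F ≤ s.totalVariation.real Set.univ := by
  rw [totalVariation, measureReal_add_apply]
  linarith [s.apply_le_posPart_real_univ hE, s.neg_apply_le_negPart_real_univ hF]

end MeasureTheory.SignedMeasure

theorem risk_diff_gap_le_total_variation_general {Ω Y : Type*} [MeasurableSpace Ω]
    (μr μs : Measure Ω) [IsProbabilityMeasure μr] [IsProbabilityMeasure μs]
    (f h₁ h₂ : Ω → Y)
    (hm1 : MeasurableSet {x | h₁ x ≠ f x})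
    (hm2 : MeasurableSet {x | h₂ x ≠ f x}) :
    ((μs {x | h₂ x ≠ f x}).toReal - (μs {x | h₁ x ≠ f x}).toReal) -
      ((μr {x | h₂ x ≠ f x}).toReal - (μr {x | h₁ x ≠ f x}).toReal) ≤
        ((μr.toSignedMeasure - μs.toSignedMeasure).totalVariation Set.univ).toReal := by
  have hgap := (μr.toSignedMeasure - μs.toSignedMeasure).sub_apply_le_totalVariation_real_univ
    hm1 hm2
  rw [Measure.toSignedMeasure_sub_apply hm1, Measure.toSignedMeasure_sub_apply hm2] at hgap
  simp only [measureReal_def] at hgap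
  linarith

theorem risk_diff_gap_le_total_variation {Ω Y : Type*} [MeasurableSpace Ω]
    (μr μs : Measure Ω) [IsProbabilityMeasure μr] [IsProbabilityMeasure μs]
    (f h₁ h₂ : Ω → Y)
    (hm1 : MeasurableSet {x | h₁ x ≠ f x})
    (hm2 : MeasurableSet {x | h₂ x ≠ f x})
    (hm12 : MeasurableSet {x | h₁ x ≠ h₂ x}) :
    ((μs {x | h₂ x ≠ f x}).toReal - (μs {x | h₁ x ≠ f x}).toReal) -
      ((μr {x | h₂ x ≠ f x}).toReal - (μr {x | h₁ x ≠ f x}).toReal) ≤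
        ((μr.toSignedMeasure - μs.toSignedMeasure).totalVariation Set.univ).toReal :=
  risk_diff_gap_le_total_variation_general μr μs f h₁ h₂ hm1 hm2
end

section
/- Let μᵣ and μₛ be probability measures on Ω with total variation distance δ(μᵣ, μₛ), and h₁, h₂ hypotheses with labeling function f. If the synthetic risk difference satisfies Δεₛ ≥ δ(μᵣ, μₛ), then the real risk difference satisfies Δεᵣ ≥ 0. -/
/-!
Write `ν = μr - μs`, `E₁, E₂` for the error sets of `h₁, h₂` and `ν = P - N` for the Jordan
decomposition, so that `δ = P(Ω) + N(Ω)`. Then `ν(E₁) - ν(E₂) ≤ P(E₁) + N(E₂) ≤ δ`, hence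
`Δεᵣ = Δεₛ + ν(E₂) - ν(E₁) ≥ Δεₛ - δ ≥ 0`.
-/

open MeasureTheory

namespace MeasureTheory.SignedMeasure

variable {α : Type*} [MeasurableSpace α] (s : SignedMeasure α)

theorem apply_le_posPart_real (A : Set α) : s A ≤ s.toJordanDecomposition.posPart.real A := by
  by_cases hA : MeasurableSet A
  · rw [s.apply_eq_posPart_real_sub_negPart_real hA]
    linarith [measureReal_nonneg (μ := s.toJordanDecomposition.negPart) (s := A)]
  · simp [s.not_measurable hA]

theorem neg_apply_le_negPart_real (B : Set α) : -s B ≤ s.toJordanDecomposition.negPart.real B := by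
  simpa [toJordanDecomposition_neg] using (-s).apply_le_posPart_real B

theorem sub_le_totalVariation_real_univ (A B : Set α) :
    s A - s B ≤ s.totalVariation.real Set.univ := by
  have hA : s A ≤ s.toJordanDecomposition.posPart.real Set.univ :=
    (s.apply_le_posPart_real A).trans (measureReal_mono (Set.subset_univ A))
  have hB : -s B ≤ s.toJordanDecomposition.negPart.real Set.univ :=
    (s.neg_apply_le_negPart_real B).trans (measureReal_mono (Set.subset_univ B))
  rw [totalVariation, measureReal_add_apply]
  linarith

end MeasureTheory.SignedMeasure

theorem rank_preservation_global_general {Ω Y : Type*} [MeasurableSpace Ω]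
    (μr μs : Measure Ω) [IsProbabilityMeasure μr] [IsProbabilityMeasure μs]
    (f h₁ h₂ : Ω → Y)
    (hm1 : MeasurableSet {x | h₁ x ≠ f x})
    (hm2 : MeasurableSet {x | h₂ x ≠ f x})
    (hgap : (μs {x | h₂ x ≠ f x}).toReal - (μs {x | h₁ x ≠ f x}).toReal ≥
      ((μr.toSignedMeasure - μs.toSignedMeasure).totalVariation Set.univ).toReal) :
    (μr {x | h₂ x ≠ f x}).toReal - (μr {x | h₁ x ≠ f x}).toReal ≥ 0 := by
  have hν := (μr.toSignedMeasure - μs.toSignedMeasure).sub_le_totalVariation_real_univ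
    {x | h₁ x ≠ f x} {x | h₂ x ≠ f x}
  rw [Measure.toSignedMeasure_sub_apply hm1, Measure.toSignedMeasure_sub_apply hm2] at hν
  simp only [measureReal_def] at hν
  linarith

theorem rank_preservation_global {Ω Y : Type*} [MeasurableSpace Ω]
    (μr μs : Measure Ω) [IsProbabilityMeasure μr] [IsProbabilityMeasure μs]
    (f h₁ h₂ : Ω → Y)
    (hm1 : MeasurableSet {x | h₁ x ≠ f x})
    (hm2 : MeasurableSet {x | h₂ x ≠ f x})
    (hm12 : MeasurableSet {x | h₁ x ≠ h₂ x})
    (hgap : (μs {x | h₂ x ≠ f x}).toReal - (μs {x | h₁ x ≠ f x}).toReal ≥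
      ((μr.toSignedMeasure - μs.toSignedMeasure).totalVariation Set.univ).toReal) :
    (μr {x | h₂ x ≠ f x}).toReal - (μr {x | h₁ x ≠ f x}).toReal ≥ 0 :=
  rank_preservation_global_general μr μs f h₁ h₂ hm1 hm2 hgap
end

section
/- Let μᵣ, μₛ be probability measures and h₁, h₂, h₃ hypotheses with labeling function f. If Δεₛ(h₁,h₂) = εₛ(h₂) − εₛ(h₁) ≥ δ(μᵣ, μₛ) and Δεₛ(h₂,h₃) = εₛ(h₃) − εₛ(h₂) ≥ δ(μᵣ, μₛ), then the full ranking is preserved on the real distribution: εᵣ(h₁) ≤ εᵣ(h₂) ≤ εᵣ(h₃). -/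
/-! Writing ν = μr − μs, one has ν A − ν B = ν (A \ B) − ν (B \ A) ≤ |ν| (A \ B) + |ν| (B \ A) ≤ |ν| Ω = δ,
so a gap of at least δ between the μs-errors of two hypotheses cannot be reversed under μr. -/

open MeasureTheory

theorem MeasureTheory.VectorMeasure.apply_sub_apply_eq_sdiff_sub_sdiff
    {X M : Type*} [MeasurableSpace X] [AddCommGroup M] [TopologicalSpace M] [T2Space M]
    (v : VectorMeasure X M) {A B : Set X} (hA : MeasurableSet A) (hB : MeasurableSet B) :
    v A - v B = v (A \ B) - v (B \ A) := by
  have hvA : v A = v (A ∩ B) + v (A \ B) := by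
    rw [← v.of_union Set.disjoint_sdiff_inter.symm (hA.inter hB) (hA.diff hB),
      Set.inter_union_sdiff]
  have hvB : v B = v (A ∩ B) + v (B \ A) := by
    rw [Set.inter_comm, ← v.of_union Set.disjoint_sdiff_inter.symm (hB.inter hA) (hB.diff hA),
      Set.inter_union_sdiff]
  rw [hvA, hvB, add_sub_add_left_eq_sub]

theorem MeasureTheory.SignedMeasure.apply_sub_apply_le_totalVariation_univ {X : Type*}
    [MeasurableSpace X] (s : SignedMeasure X) {A B : Set X}
    (hA : MeasurableSet A) (hB : MeasurableSet B) :
    s A - s B ≤ s.totalVariation.real Set.univ :=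
  calc s A - s B = s (A \ B) - s (B \ A) := s.apply_sub_apply_eq_sdiff_sub_sdiff hA hB
    _ ≤ ‖s (A \ B)‖ + ‖s (B \ A)‖ := (Real.le_norm_self _).trans (norm_sub_le _ _)
    _ ≤ s.totalVariation.real (A \ B) + s.totalVariation.real (B \ A) :=
        add_le_add (s.norm_le_totalVariation _) (s.norm_le_totalVariation _)
    _ = s.totalVariation.real (A \ B ∪ B \ A) :=
        (measureReal_union disjoint_sdiff_sdiff (hB.diff hA)).symm
    _ ≤ s.totalVariation.real Set.univ := measureReal_mono (Set.subset_univ _)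

theorem MeasureTheory.Measure.measureReal_le_of_totalVariation_le_sub {X : Type*}
    [MeasurableSpace X] {μ ν : Measure X} [IsFiniteMeasure μ] [IsFiniteMeasure ν] {A B : Set X}
    (hA : MeasurableSet A) (hB : MeasurableSet B)
    (hgap : (μ.toSignedMeasure - ν.toSignedMeasure).totalVariation.real Set.univ ≤
      ν.real B - ν.real A) :
    μ.real A ≤ μ.real B := by
  have := (μ.toSignedMeasure - ν.toSignedMeasure).apply_sub_apply_le_totalVariation_univ hA hB
  rw [Measure.toSignedMeasure_sub_apply hA, Measure.toSignedMeasure_sub_apply hB] at this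
  linarith

theorem rank_preservation_three {Ω Y : Type*} [MeasurableSpace Ω]
    (μr μs : Measure Ω) [IsProbabilityMeasure μr] [IsProbabilityMeasure μs]
    (f h₁ h₂ h₃ : Ω → Y)
    (hm1 : MeasurableSet {x | h₁ x ≠ f x})
    (hm2 : MeasurableSet {x | h₂ x ≠ f x})
    (hm3 : MeasurableSet {x | h₃ x ≠ f x})
    (hgap12 : (μs {x | h₂ x ≠ f x}).toReal - (μs {x | h₁ x ≠ f x}).toReal ≥
      ((μr.toSignedMeasure - μs.toSignedMeasure).totalVariation Set.univ).toReal)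
    (hgap23 : (μs {x | h₃ x ≠ f x}).toReal - (μs {x | h₂ x ≠ f x}).toReal ≥
      ((μr.toSignedMeasure - μs.toSignedMeasure).totalVariation Set.univ).toReal) :
    (μr {x | h₁ x ≠ f x}).toReal ≤ (μr {x | h₂ x ≠ f x}).toReal ∧
      (μr {x | h₂ x ≠ f x}).toReal ≤ (μr {x | h₃ x ≠ f x}).toReal :=
  ⟨Measure.measureReal_le_of_totalVariation_le_sub hm1 hm2 hgap12,
    Measure.measureReal_le_of_totalVariation_le_sub hm2 hm3 hgap23⟩
end

section
/- Let h₁, …, hₙ be hypotheses with synthetic risks εₛ(h₁) < εₛ(h₂) < … < εₛ(hₙ) such that consecutive gaps satisfy εₛ(h_{i+1}) − εₛ(hᵢ) ≥ δ(μᵣ, μₛ) for all i. Then the real risks are nondecreasing: εᵣ(h₁) ≤ εᵣ(h₂) ≤ … ≤ εᵣ(hₙ), i.e., Spearman rank agreement is perfect. -/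
open MeasureTheory

lemma sub_le_tv {Ω : Type*} [MeasurableSpace Ω] (s : SignedMeasure Ω) {A B : Set Ω}
    (hA : MeasurableSet A) (hB : MeasurableSet B) :
    s A - s B ≤ (s.totalVariation Set.univ).toReal := by
  set j := s.toJordanDecomposition with hj
  have hsm : ∀ {C : Set Ω}, MeasurableSet C →
      s C = (j.posPart C).toReal - (j.negPart C).toReal := by
    intro C hC
    conv_lhs => rw [← s.toSignedMeasure_toJordanDecomposition]
    exact Measure.toSignedMeasure_sub_apply hC
  have htv : (s.totalVariation Set.univ).toReal
      = (j.posPart Set.univ).toReal + (j.negPart Set.univ).toReal := by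
    rw [SignedMeasure.totalVariation, Measure.add_apply,
      ENNReal.toReal_add (measure_ne_top _ _) (measure_ne_top _ _)]
  rw [hsm hA, hsm hB, htv]
  have h1 : (j.posPart A).toReal ≤ (j.posPart Set.univ).toReal :=
    ENNReal.toReal_mono (measure_ne_top _ _) (measure_mono (Set.subset_univ _))
  have h2 : (j.negPart B).toReal ≤ (j.negPart Set.univ).toReal :=
    ENNReal.toReal_mono (measure_ne_top _ _) (measure_mono (Set.subset_univ _))
  have h3 : 0 ≤ (j.negPart A).toReal := ENNReal.toReal_nonneg
  have h4 : 0 ≤ (j.posPart B).toReal := ENNReal.toReal_nonneg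
  linarith

theorem rank_preservation_chain {Ω Y : Type*} [MeasurableSpace Ω]
    (μr μs : Measure Ω) [IsProbabilityMeasure μr] [IsProbabilityMeasure μs]
    (f : Ω → Y) (n : ℕ) (h : ℕ → Ω → Y)
    (hm : ∀ i, i < n → MeasurableSet {x | h i x ≠ f x})
    (hstrict : ∀ i, i + 1 < n →
      (μs {x | h i x ≠ f x}).toReal < (μs {x | h (i + 1) x ≠ f x}).toReal)
    (hgap : ∀ i, i + 1 < n →
      (μs {x | h (i + 1) x ≠ f x}).toReal - (μs {x | h i x ≠ f x}).toReal ≥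
        ((μr.toSignedMeasure - μs.toSignedMeasure).totalVariation Set.univ).toReal) :
    ∀ i j, i ≤ j → j < n →
      (μr {x | h i x ≠ f x}).toReal ≤ (μr {x | h j x ≠ f x}).toReal := by
  have step : ∀ i, i + 1 < n →
      (μr {x | h i x ≠ f x}).toReal ≤ (μr {x | h (i + 1) x ≠ f x}).toReal := by
    intro i hi
    set s := μr.toSignedMeasure - μs.toSignedMeasure with hs
    have hA := hm i (Nat.lt_of_succ_lt hi)
    have hB := hm (i + 1) hi
    have key := sub_le_tv s hA hB
    have e1 : s {x | h i x ≠ f x} =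
        (μr {x | h i x ≠ f x}).toReal - (μs {x | h i x ≠ f x}).toReal :=
      Measure.toSignedMeasure_sub_apply hA
    have e2 : s {x | h (i + 1) x ≠ f x} =
        (μr {x | h (i + 1) x ≠ f x}).toReal - (μs {x | h (i + 1) x ≠ f x}).toReal :=
      Measure.toSignedMeasure_sub_apply hB
    have hg := hgap i hi
    rw [e1, e2] at key
    linarith
  intro i j hij hj
  induction j with
  | zero => simp_all
  | succ k ih =>
    rcases Nat.lt_succ_iff_lt_or_eq.mp (Nat.lt_succ_of_le hij) with hlt | heq
    · exact le_trans (ih (Nat.lt_succ_iff.mp hlt) (Nat.lt_of_succ_lt hj)) (step k hj)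
    · subst heq; exact le_refl _
end
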